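/- arXiv:2301.11685 — 5 statements merged into one kernel-verified Lean document; each statement's English description precedes it below -/
import Mathlib

section
/- Let θ ∈ C^∞(ℝ) satisfy θ(x) = 1 for x ≥ 1, θ(x) = 0 for x ≤ −1, and θ(−x)² + θ(x)² = 1 for all x ∈ ℝ. Let W > 0, and for j ∈ ℤ set x_j = sign(j)·(W/2)·(1 − 2^{−|j|}), I_j = x_j + (W/(3·2^{|j|+1}))·[−1,1), D_j = I_j ∪ I_{j+1}, θ_j(x) = θ(2(x−x_j)/|I_j|)·θ(−2(x−x_{j+1})/|I_{j+1}|), and φ_{j,k}(x) = (2/|D_j|)^{1/2}·θ_j(x)·exp(2πi x k/|D_j|) for j,k ∈ ℤ. Then the family {φ_{j,k}}_{j,k∈ℤ} forms a tight frame for L²(−W/2, W/2) with frame constants A = B = 2; that is, Σ_{j,k∈ℤ} |⟨f, φ_{j,k}⟩|² = 2‖f‖₂² for every f ∈ L²(−W/2, W/2). -/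
open MeasureTheory Set Filter
open scoped ENNReal NNReal Classical

noncomputable section

/-- The eigenvalue/singular-value sequence of an operator, listed with multiplicity:
`eigSeq S n = inf {‖S - S₀‖ : rank S₀ < n+1}` (so `eigSeq S (k-1)` is the paper's `λ_k`). -/
def eigSeq {H : Type*} [NormedAddCommGroup H] [NormedSpace ℂ H] (S : H →L[ℂ] H) (n : ℕ) : ℝ :=
  sInf {r : ℝ | ∃ S₀ : H →L[ℂ] H,
    Module.rank ℂ (LinearMap.range (S₀ : H →ₗ[ℂ] H)) < ((n + 1 : ℕ) : Cardinal) ∧ r = ‖S - S₀‖}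

/-- Center `x_j = sign(j)·(W/2)·(1 - 2^{-|j|})` of the dyadic decomposition of `(-W/2, W/2)`. -/
def xJ (W : ℝ) (j : ℤ) : ℝ := (Int.sign j : ℝ) * (W / 2) * (1 - (2 : ℝ)⁻¹ ^ j.natAbs)

/-- Length of the interval `I_j = x_j + (W/(3·2^{|j|+1}))·[-1,1)`. -/
def lenI (W : ℝ) (j : ℤ) : ℝ := W / (3 * 2 ^ j.natAbs)

/-- Length of `D_j = I_j ∪ I_{j+1}`. -/
def lenD (W : ℝ) (j : ℤ) : ℝ := lenI W j + lenI W (j + 1)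

/-- The window `θ_j(x) = θ(2(x-x_j)/|I_j|) · θ(-2(x-x_{j+1})/|I_{j+1}|)`. -/
def thetaJ (θ : ℝ → ℝ) (W : ℝ) (j : ℤ) (x : ℝ) : ℝ :=
  θ (2 * (x - xJ W j) / lenI W j) * θ (-(2 * (x - xJ W (j + 1)) / lenI W (j + 1)))

/-- The local trigonometric function
`φ_{j,k}(x) = (2/|D_j|)^{1/2} θ_j(x) exp(2πi x k/|D_j|)`. -/
def phiJK (θ : ℝ → ℝ) (W : ℝ) (j k : ℤ) (x : ℝ) : ℂ :=
  ((Real.sqrt (2 / lenD W j) * thetaJ θ W j x : ℝ) : ℂ) *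
    Complex.exp (2 * Real.pi * Complex.I * ((x * k / lenD W j : ℝ) : ℂ))

section Aux

open Complex AddCircle

variable {θ : ℝ → ℝ} {W : ℝ}


def aJ (W : ℝ) (j : ℤ) : ℝ := xJ W j - lenI W j / 2


lemma lenI_pos (hW : 0 < W) (j : ℤ) : 0 < lenI W j := by
  unfold lenI; positivity

lemma lenD_pos (hW : 0 < W) (j : ℤ) : 0 < lenD W j :=
  add_pos (lenI_pos hW j) (lenI_pos hW (j+1))

lemma aJ_eq_pos (j : ℤ) (hj : 0 ≤ j) :
    aJ W j = W / 2 - 2 * W / (3 * 2 ^ j.natAbs) := by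
  have h2 : (0:ℝ) < 2 ^ j.natAbs := by positivity
  rcases hj.eq_or_lt with rfl | h
  · show (Int.sign 0 : ℝ) * (W / 2) * _ - _ = _
    norm_num [lenI]; linarith
  · have hs : Int.sign j = 1 := Int.sign_eq_one_iff_pos.mpr h
    unfold aJ xJ lenI
    rw [hs, inv_pow]
    push_cast
    field_simp
    ring

lemma aJ_eq_neg (j : ℤ) (hj : j < 0) :
    aJ W j = -(W / 2) + W / (3 * 2 ^ j.natAbs) := by
  have h2 : (0:ℝ) < 2 ^ j.natAbs := by positivity
  have hs : Int.sign j = -1 := Int.sign_eq_neg_one_iff_neg.mpr hj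
  unfold aJ xJ lenI
  rw [hs, inv_pow]
  push_cast
  field_simp
  ring

lemma aJ_succ (j : ℤ) : aJ W (j + 1) = aJ W j + lenI W j := by
  rcases le_or_gt 0 j with hj | hj
  · have h1 : (0:ℤ) ≤ j + 1 := by omega
    have hn : (j+1).natAbs = j.natAbs + 1 := by omega
    rw [aJ_eq_pos j hj, aJ_eq_pos (j+1) h1, hn, lenI, pow_succ]
    have h2 : (0:ℝ) < 2 ^ j.natAbs := by positivity
    field_simp
    ring
  · rcases eq_or_lt_of_le (by omega : j + 1 ≤ 0) with h1 | h1
    · have hj1 : j = -1 := by omega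
      subst hj1
      rw [show (-1:ℤ) + 1 = 0 from by norm_num, aJ_eq_neg (-1) (by norm_num),
        aJ_eq_pos 0 le_rfl]
      norm_num [lenI]
      linarith
    · have hn : j.natAbs = (j+1).natAbs + 1 := by omega
      rw [aJ_eq_neg j hj, aJ_eq_neg (j+1) h1, lenI, hn, pow_succ]
      have h2 : (0:ℝ) < 2 ^ (j+1).natAbs := by positivity
      field_simp
      ring

lemma aJ_lt_half (hW : 0 < W) (j : ℤ) : aJ W j < W / 2 := by
  rcases le_or_gt 0 j with hj | hj
  · rw [aJ_eq_pos j hj]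
    have h2 : (0:ℝ) < 2 ^ j.natAbs := by positivity
    have : 0 < 2 * W / (3 * 2 ^ j.natAbs) := by positivity
    linarith
  · rw [aJ_eq_neg j hj]
    have h2 : (1:ℝ) ≤ 2 ^ j.natAbs := one_le_pow₀ (by norm_num)
    have h3 : (0:ℝ) < 2 ^ j.natAbs := by positivity
    have : W / (3 * 2 ^ j.natAbs) ≤ W / 3 :=
      div_le_div_of_nonneg_left hW.le (by norm_num) (by linarith)
    linarith

lemma neg_half_lt_aJ (hW : 0 < W) (j : ℤ) : -(W / 2) < aJ W j := by
  rcases le_or_gt 0 j with hj | hj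
  · rw [aJ_eq_pos j hj]
    have h2 : (1:ℝ) ≤ 2 ^ j.natAbs := one_le_pow₀ (by norm_num)
    have h3 : (0:ℝ) < 2 ^ j.natAbs := by positivity
    have : 2 * W / (3 * 2 ^ j.natAbs) ≤ 2 * W / 3 :=
      div_le_div_of_nonneg_left (by linarith) (by norm_num) (by linarith)
    linarith
  · rw [aJ_eq_neg j hj]
    have h2 : (0:ℝ) < 2 ^ j.natAbs := by positivity
    have : 0 < W / (3 * 2 ^ j.natAbs) := by positivity
    linarith

lemma aJ_mono (hW : 0 < W) : StrictMono (aJ W) :=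
  strictMono_int_of_lt_succ fun j => by
    rw [aJ_succ]; linarith [lenI_pos hW j]

lemma exists_mem_Ico (hW : 0 < W) {x : ℝ} (hx : x ∈ Ioo (-(W/2)) (W/2)) :
    ∃ j : ℤ, x ∈ Ico (aJ W j) (aJ W (j + 1)) := by
  obtain ⟨hx1, hx2⟩ := hx
  obtain ⟨N, hN⟩ : ∃ N : ℕ, (2:ℝ)⁻¹ ^ N < (W/2 - x) * 3 / (2 * W) := by
    apply exists_pow_lt_of_lt_one (div_pos (by nlinarith) (by linarith))
    norm_num
  have hNx : x < aJ W (N : ℤ) := by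
    rw [aJ_eq_pos _ (Int.ofNat_nonneg N), show ((N:ℤ)).natAbs = N from by omega]
    have h2 : (0:ℝ) < 2 ^ N := by positivity
    have key : 2 * W / (3 * 2 ^ N) < W / 2 - x := by
      have h3 := mul_lt_mul_of_pos_left hN (by positivity : (0:ℝ) < 2 * W / 3)
      calc 2 * W / (3 * 2 ^ N) = 2 * W / 3 * (2:ℝ)⁻¹ ^ N := by
            rw [inv_pow]; ring
        _ < 2 * W / 3 * ((W/2 - x) * 3 / (2 * W)) := h3
        _ = W / 2 - x := by field_simp
    linarith
  obtain ⟨M, hM⟩ : ∃ M : ℕ, (2:ℝ)⁻¹ ^ M < (x + W/2) * 3 / W := by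
    apply exists_pow_lt_of_lt_one (div_pos (by nlinarith) (by linarith))
    norm_num
  have hMx : aJ W (-(M+1) : ℤ) ≤ x := by
    rw [aJ_eq_neg _ (by omega), show ((-(M+1) : ℤ)).natAbs = M + 1 from by omega]
    have h2 : (0:ℝ) < 2 ^ M := by positivity
    have key : W / (3 * 2 ^ (M+1)) < x + W / 2 := by
      have h3 := mul_lt_mul_of_pos_left hM (by positivity : (0:ℝ) < W / 3)
      calc W / (3 * 2 ^ (M+1)) = W / 3 * (2:ℝ)⁻¹ ^ (M+1) := by
            rw [inv_pow]; ring
        _ ≤ W / 3 * (2:ℝ)⁻¹ ^ M := by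
            apply mul_le_mul_of_nonneg_left _ (by positivity)
            exact pow_le_pow_of_le_one (by norm_num) (by norm_num) (by omega)
        _ < W / 3 * ((x + W/2) * 3 / W) := h3
        _ = x + W / 2 := by field_simp
    linarith
  -- Nat.find the first k with x < aJ (-(M+1) + k)
  have hPex : ∃ k : ℕ, x < aJ W (-(M+1 : ℤ) + k) := by
    refine ⟨N + M + 1, ?_⟩
    rw [show (-(M+1 : ℤ) + (N + M + 1 : ℕ)) = (N : ℤ) from by push_cast; ring]
    exact hNx
  classical
  let k := Nat.find hPex
  have hk : x < aJ W (-(M+1 : ℤ) + k) := Nat.find_spec hPex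
  have hk0 : k ≠ 0 := by
    intro h
    have := hk
    rw [h] at this
    simp only [Nat.cast_zero, add_zero] at this
    linarith
  obtain ⟨m, hm⟩ : ∃ m, k = m + 1 := ⟨k - 1, by omega⟩
  have hmlt : ¬ x < aJ W (-(M+1 : ℤ) + m) := Nat.find_min hPex (by omega)
  refine ⟨-(M+1 : ℤ) + m, ⟨not_lt.mp hmlt, ?_⟩⟩
  have : (-(M+1 : ℤ) + m) + 1 = -(M+1 : ℤ) + k := by rw [hm]; push_cast; ring
  rw [this]
  exact hk




lemma arg_le_neg_one_iff (hW : 0 < W) (j : ℤ) (x : ℝ) :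
    2 * (x - xJ W j) / lenI W j ≤ -1 ↔ x ≤ aJ W j := by
  rw [div_le_iff₀ (lenI_pos hW j)]
  have h : aJ W j = xJ W j - lenI W j / 2 := rfl
  constructor <;> intro <;> linarith

lemma one_le_arg_iff (hW : 0 < W) (j : ℤ) (x : ℝ) :
    1 ≤ 2 * (x - xJ W j) / lenI W j ↔ aJ W (j + 1) ≤ x := by
  rw [le_div_iff₀ (lenI_pos hW j)]
  have h : aJ W j = xJ W j - lenI W j / 2 := rfl
  have h2 := aJ_succ (W := W) j
  constructor <;> intro <;> linarith

lemma thetaJ_eq_zero_left (hW : 0 < W) (hθ0 : ∀ x : ℝ, x ≤ -1 → θ x = 0)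
    {j : ℤ} {x : ℝ} (hx : x ≤ aJ W j) : thetaJ θ W j x = 0 := by
  rw [thetaJ, hθ0 _ ((arg_le_neg_one_iff hW j x).mpr hx), zero_mul]

lemma thetaJ_eq_zero_right (hW : 0 < W) (hθ0 : ∀ x : ℝ, x ≤ -1 → θ x = 0)
    {j : ℤ} {x : ℝ} (hx : aJ W (j + 2) ≤ x) : thetaJ θ W j x = 0 := by
  rw [thetaJ, hθ0 (-(2 * (x - xJ W (j + 1)) / lenI W (j + 1))), mul_zero]
  have := (one_le_arg_iff hW (j+1) x).mpr (by rwa [show j + 1 + 1 = j + 2 from by ring])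
  linarith

lemma thetaJ_on_Ico_self (hW : 0 < W) (hθ1 : ∀ x : ℝ, 1 ≤ x → θ x = 1)
    {j : ℤ} {x : ℝ} (hx : x ∈ Ico (aJ W j) (aJ W (j + 1))) :
    thetaJ θ W j x = θ (2 * (x - xJ W j) / lenI W j) := by
  rw [thetaJ, hθ1 (-(2 * (x - xJ W (j + 1)) / lenI W (j + 1))), mul_one]
  have : 2 * (x - xJ W (j+1)) / lenI W (j+1) ≤ -1 :=
    (arg_le_neg_one_iff hW (j+1) x).mpr hx.2.le
  linarith

lemma thetaJ_on_Ico_pred (hW : 0 < W) (hθ1 : ∀ x : ℝ, 1 ≤ x → θ x = 1)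
    {j : ℤ} {x : ℝ} (hx : x ∈ Ico (aJ W j) (aJ W (j + 1))) :
    thetaJ θ W (j - 1) x = θ (-(2 * (x - xJ W j) / lenI W j)) := by
  rw [thetaJ, show j - 1 + 1 = j from by ring,
    hθ1 (2 * (x - xJ W (j-1)) / lenI W (j-1)), one_mul]
  rw [one_le_arg_iff hW (j-1) x, show j - 1 + 1 = j from by ring]
  exact hx.1

lemma abs_theta_le_one (hθsq : ∀ x : ℝ, θ (-x) ^ 2 + θ x ^ 2 = 1) (y : ℝ) : |θ y| ≤ 1 := by
  nlinarith [hθsq y, sq_nonneg (θ (-y)), _root_.sq_abs (θ y), abs_nonneg (θ y)]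

lemma abs_thetaJ_le_one (hθsq : ∀ x : ℝ, θ (-x) ^ 2 + θ x ^ 2 = 1) (j : ℤ) (x : ℝ) :
    |thetaJ θ W j x| ≤ 1 := by
  rw [thetaJ, abs_mul]
  exact mul_le_one₀ (abs_theta_le_one hθsq _) (abs_nonneg _) (abs_theta_le_one hθsq _)

lemma continuous_thetaJ (hθc : Continuous θ) (j : ℤ) : Continuous (thetaJ θ W j) := by
  unfold thetaJ
  exact (hθc.comp (((continuous_const.mul (continuous_id.sub continuous_const)).div_const
    _))).mul (hθc.comp ((((continuous_const.mul (continuous_id.sub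
      continuous_const)).div_const _)).neg))

lemma tsum_ofReal_thetaJ (hW : 0 < W) (hθ1 : ∀ x : ℝ, 1 ≤ x → θ x = 1)
    (hθ0 : ∀ x : ℝ, x ≤ -1 → θ x = 0) (hθsq : ∀ x : ℝ, θ (-x) ^ 2 + θ x ^ 2 = 1)
    {x : ℝ} (hx : x ∈ Ioo (-(W/2)) (W/2)) {c : ℝ} (hc : 0 ≤ c) :
    ∑' j : ℤ, ENNReal.ofReal (thetaJ θ W j x ^ 2 * c) = ENNReal.ofReal c := by
  obtain ⟨j, hj⟩ := exists_mem_Ico hW hx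
  have hzero : ∀ m : ℤ, m ∉ ({j-1, j} : Finset ℤ) →
      ENNReal.ofReal (thetaJ θ W m x ^ 2 * c) = 0 := by
    intro m hm
    have hm' : m ≤ j - 2 ∨ j + 1 ≤ m := by
      simp only [Finset.mem_insert, Finset.mem_singleton] at hm; omega
    have hth : thetaJ θ W m x = 0 := by
      rcases hm' with h | h
      · exact thetaJ_eq_zero_right hW hθ0
          (le_trans ((aJ_mono hW).monotone (by omega : m + 2 ≤ j)) hj.1)
      · exact thetaJ_eq_zero_left hW hθ0
          (le_trans hj.2.le ((aJ_mono hW).monotone h))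
    rw [hth]
    simp
  rw [tsum_eq_sum hzero, Finset.sum_pair (by omega : j - 1 ≠ j),
    thetaJ_on_Ico_pred hW hθ1 hj, thetaJ_on_Ico_self hW hθ1 hj,
    ← ENNReal.ofReal_add (by positivity) (by positivity)]
  congr 1
  linear_combination c * hθsq (2 * (x - xJ W j) / lenI W j)




lemma blockSum (hθc : Continuous θ) (hθ1 : ∀ x : ℝ, 1 ≤ x → θ x = 1)
    (hθ0 : ∀ x : ℝ, x ≤ -1 → θ x = 0) (hθsq : ∀ x : ℝ, θ (-x) ^ 2 + θ x ^ 2 = 1)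
    (hW : 0 < W) (j : ℤ) (f : Lp ℂ 2 (volume.restrict (Ioo (-(W/2)) (W/2)))) :
    Summable (fun k : ℤ => ‖∫ x, f x * (starRingEnd ℂ) (phiJK θ W j k x)
        ∂(volume.restrict (Ioo (-(W/2)) (W/2)))‖ ^ 2) ∧
    ∑' k : ℤ, ‖∫ x, f x * (starRingEnd ℂ) (phiJK θ W j k x)
        ∂(volume.restrict (Ioo (-(W/2)) (W/2)))‖ ^ 2
      = 2 * ∫ x, thetaJ θ W j x ^ 2 * ‖f x‖ ^ 2
          ∂(volume.restrict (Ioo (-(W/2)) (W/2))) := by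
  have hT : 0 < lenD W j := lenD_pos hW j
  haveI : Fact (0 < lenD W j) := ⟨hT⟩
  set T := lenD W j with hTdef
  set a := aJ W j with ha
  have haT : a + T = aJ W (j+2) := by
    rw [show j+2 = (j+1)+1 from by ring, aJ_succ, aJ_succ, hTdef, lenD, ha]
    ring
  have hsub : Ioc a (a + T) ⊆ Ioo (-(W/2)) (W/2) := fun x hx =>
    ⟨(neg_half_lt_aJ hW j).trans hx.1,
     lt_of_le_of_lt (haT ▸ hx.2) (aJ_lt_half hW (j+2))⟩
  have hvan : ∀ x, x ∉ Ioc a (a+T) → thetaJ θ W j x = 0 := by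
    intro x hx
    rcases le_or_gt x a with h | h
    · exact thetaJ_eq_zero_left hW hθ0 h
    · have h2 : a + T < x := by
        by_contra hc
        exact hx ⟨h, not_lt.mp hc⟩
      exact thetaJ_eq_zero_right hW hθ0 (by rw [← haT]; exact h2.le)
  set G : ℝ → ℂ := fun x => ((Real.sqrt (2/T) * thetaJ θ W j x : ℝ) : ℂ) * f x with hG
  have hGsm : StronglyMeasurable G :=
    ((Complex.continuous_ofReal.comp
      (continuous_const.mul (continuous_thetaJ hθc j))).stronglyMeasurable).mul
      (Lp.stronglyMeasurable f)
  have hGbound : ∀ x, ‖G x‖ ≤ Real.sqrt (2/T) * ‖f x‖ := by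
    intro x
    rw [hG]
    simp only [norm_mul, Complex.norm_real, Real.norm_eq_abs]
    apply mul_le_mul_of_nonneg_right _ (norm_nonneg _)
    rw [_root_.abs_of_nonneg (Real.sqrt_nonneg _)]
    calc Real.sqrt (2/T) * |thetaJ θ W j x| ≤ Real.sqrt (2/T) * 1 :=
          mul_le_mul_of_nonneg_left (abs_thetaJ_le_one hθsq j x) (Real.sqrt_nonneg _)
      _ = Real.sqrt (2/T) := mul_one _
  have hrr : (volume.restrict (Ioo (-(W/2)) (W/2))).restrict (Ioc a (a+T)) = volume.restrict (Ioc a (a+T)) := by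
    rw [Measure.restrict_restrict measurableSet_Ioc, inter_eq_left.mpr hsub]
  have hGmem : MemLp G 2 (volume.restrict (Ioc a (a+T))) := by
    have h2 : MemLp (⇑f) 2 ((volume.restrict (Ioo (-(W/2)) (W/2))).restrict (Ioc a (a+T))) := (Lp.memLp f).restrict _
    rw [hrr] at h2
    exact MemLp.of_le_mul h2 hGsm.aestronglyMeasurable (ae_of_all _ hGbound)
  set Gt : AddCircle T → ℂ := AddCircle.liftIoc T a G with hGt
  have hGtsm : StronglyMeasurable Gt := by
    have heq : Gt = G ∘ (fun z : AddCircle T =>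
        ((AddCircle.equivIoc T a z : Ioc a (a+T)) : ℝ)) := rfl
    rw [heq]
    exact hGsm.comp_measurable
      (measurable_subtype_coe.comp (AddCircle.measurableEquivIoc T a).measurable)
  have hGteq : (fun x : ℝ => Gt ((x : ℝ) : AddCircle T)) =ᵐ[volume.restrict (Ioc a (a+T))] G :=
    (ae_restrict_mem measurableSet_Ioc).mono fun x hx => AddCircle.liftIoc_coe_apply hx
  have hGtmem : MemLp Gt 2 (haarAddCircle (T := T)) := by
    have hmp := AddCircle.measurePreserving_mk T a
    have he : eLpNorm Gt 2 (volume : Measure (AddCircle T))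
        = eLpNorm G 2 (volume.restrict (Ioc a (a+T))) := by
      rw [← eLpNorm_comp_measurePreserving hGtsm.aestronglyMeasurable hmp]
      exact eLpNorm_congr_ae hGteq
    have hvol : MemLp Gt 2 (volume : Measure (AddCircle T)) :=
      ⟨hGtsm.aestronglyMeasurable, by rw [he]; exact hGmem.2⟩
    have hhaar : (haarAddCircle (T := T))
        = (ENNReal.ofReal T)⁻¹ • (volume : Measure (AddCircle T)) := by
      rw [AddCircle.volume_eq_smul_haarAddCircle, smul_smul,
        ENNReal.inv_mul_cancel (by simpa using hT) ENNReal.ofReal_ne_top, one_smul]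
    rw [hhaar]
    exact hvol.smul_measure (by simpa using hT)
  set gL : Lp ℂ 2 (haarAddCircle (T := T)) := hGtmem.toLp Gt with hgLdef
  have hgL : ⇑gL =ᵐ[haarAddCircle (T := T)] Gt := hGtmem.coeFn_toLp
  -- pointwise identity for the integrand
  have hpoint : ∀ (k : ℤ) (x : ℝ), f x * (starRingEnd ℂ) (phiJK θ W j k x)
      = (fourier (-k) ((x : ℝ) : AddCircle T)) • G x := by
    intro k x
    have hexp : (starRingEnd ℂ) (Complex.exp (2 * Real.pi * Complex.I * ((x * k / T : ℝ) : ℂ)))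
        = fourier (-k) ((x : ℝ) : AddCircle T) := by
      rw [← Complex.exp_conj, fourier_coe_apply]
      congr 1
      simp only [map_mul, Complex.conj_ofReal, Complex.conj_I, map_ofNat]
      push_cast
      ring
    rw [phiJK, ← hTdef, map_mul, Complex.conj_ofReal, hexp, smul_eq_mul, hG]
    ring
  -- moving the integral to the circle
  have hIoc : ∀ {E : Type} [NormedAddCommGroup E] [NormedSpace ℝ E] (F : ℝ → E),
      (∀ x, x ∉ Ioc a (a+T) → F x = 0) →
      ∫ x, F x ∂(volume.restrict (Ioo (-(W/2)) (W/2))) = ∫ x in Ioc a (a+T), F x ∂volume := by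
    intro E _ _ F hF
    have h1 : ∫ x, F x ∂(volume.restrict (Ioo (-(W/2)) (W/2))) = ∫ x, (Ioc a (a+T)).indicator F x ∂(volume.restrict (Ioo (-(W/2)) (W/2))) :=
      integral_congr_ae (ae_of_all _ fun x =>
        (Set.indicator_apply_eq_self.mpr (hF x)).symm)
    rw [h1, integral_indicator measurableSet_Ioc]
    rw [hrr]
  have hcoeff : ∀ k : ℤ, (∫ x, f x * (starRingEnd ℂ) (phiJK θ W j k x) ∂(volume.restrict (Ioo (-(W/2)) (W/2))))
      = (T : ℝ) • fourierCoeff (⇑gL) k := by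
    intro k
    have h1 : fourierCoeff (⇑gL) k = fourierCoeff Gt k := by
      simp only [fourierCoeff]
      exact integral_congr_ae ((hgL.mono fun x hx => by simp [hx]))
    have h2 : ∫ x, f x * (starRingEnd ℂ) (phiJK θ W j k x) ∂(volume.restrict (Ioo (-(W/2)) (W/2)))
        = ∫ x in Ioc a (a+T), fourier (-k) ((x : ℝ) : AddCircle T) • G x ∂volume := by
      rw [show (fun x => f x * (starRingEnd ℂ) (phiJK θ W j k x))
          = fun x => fourier (-k) ((x : ℝ) : AddCircle T) • G x from funext (hpoint k)]
      exact hIoc _ fun x hx => by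
        show _ • (((Real.sqrt (2/T) * thetaJ θ W j x : ℝ) : ℂ) * f x) = 0
        rw [hvan x hx]
        simp
    rw [h2, h1, fourierCoeff_eq_intervalIntegral Gt k a,
      intervalIntegral.integral_of_le (by linarith : a ≤ a + T), smul_smul,
      mul_one_div, div_self hT.ne', one_smul]
    exact (setIntegral_congr_fun measurableSet_Ioc
      (fun x hx => by rw [hGt, AddCircle.liftIoc_coe_apply hx])).symm
  -- Parseval
  have hpars := tsum_sq_fourierCoeff gL
  have hsummable : Summable (fun i : ℤ => ‖fourierCoeff (⇑gL) i‖ ^ 2) := by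
    have h := ((fourierBasis (T := T)).orthonormal).inner_products_summable (x := gL)
    simpa only [← HilbertBasis.repr_apply_apply, fourierBasis_repr] using h
  -- computing the L² norm of gL
  have hnorm : ∫ t : AddCircle T, ‖gL t‖^2 ∂(haarAddCircle (T := T))
      = (1/T) * ((2/T) * ∫ x, thetaJ θ W j x ^ 2 * ‖f x‖ ^ 2 ∂(volume.restrict (Ioo (-(W/2)) (W/2)))) := by
    have s1 : ∫ t : AddCircle T, ‖gL t‖^2 ∂(haarAddCircle (T := T))
        = ∫ t : AddCircle T, ‖Gt t‖^2 ∂(haarAddCircle (T := T)) :=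
      integral_congr_ae (hgL.mono fun x hx => by simp [hx])
    have s2 : ∫ t : AddCircle T, ‖Gt t‖^2 ∂(volume : Measure (AddCircle T))
        = T * ∫ t : AddCircle T, ‖Gt t‖^2 ∂(haarAddCircle (T := T)) := by
      rw [AddCircle.volume_eq_smul_haarAddCircle, integral_smul_measure,
        ENNReal.toReal_ofReal hT.le, smul_eq_mul]
    have s3 : ∫ x in Ioc a (a+T), ‖Gt ((x:ℝ) : AddCircle T)‖^2 ∂volume
        = ∫ t : AddCircle T, ‖Gt t‖^2 ∂(volume : Measure (AddCircle T)) :=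
      AddCircle.integral_preimage T a (fun z => ‖Gt z‖^2)
    have s4 : ∫ x in Ioc a (a+T), ‖Gt ((x:ℝ) : AddCircle T)‖^2 ∂volume
        = ∫ x in Ioc a (a+T), (2/T) * (thetaJ θ W j x ^ 2 * ‖f x‖ ^ 2) ∂volume := by
      apply setIntegral_congr_fun measurableSet_Ioc
      intro x hx
      simp only [hGt, hG]
      rw [AddCircle.liftIoc_coe_apply hx]
      simp only [norm_mul, Complex.norm_real, Real.norm_eq_abs, mul_pow, _root_.sq_abs]
      rw [Real.sq_sqrt (by positivity : (0:ℝ) ≤ 2/T)]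
      ring
    have s5 : ∫ x, thetaJ θ W j x ^ 2 * ‖f x‖ ^ 2 ∂(volume.restrict (Ioo (-(W/2)) (W/2)))
        = ∫ x in Ioc a (a+T), thetaJ θ W j x ^ 2 * ‖f x‖ ^ 2 ∂volume :=
      hIoc _ fun x hx => by rw [hvan x hx]; ring
    calc ∫ t : AddCircle T, ‖gL t‖^2 ∂(haarAddCircle (T := T))
        = ∫ t : AddCircle T, ‖Gt t‖^2 ∂(haarAddCircle (T := T)) := s1
      _ = (1/T) * ∫ t : AddCircle T, ‖Gt t‖^2 ∂(volume : Measure (AddCircle T)) := by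
          rw [s2]; field_simp
      _ = (1/T) * ∫ x in Ioc a (a+T), ‖Gt ((x:ℝ) : AddCircle T)‖^2 ∂volume := by rw [s3]
      _ = (1/T) * ((2/T) * ∫ x in Ioc a (a+T),
            thetaJ θ W j x ^ 2 * ‖f x‖ ^ 2 ∂volume) := by
          rw [s4, integral_const_mul]
      _ = (1/T) * ((2/T) * ∫ x, thetaJ θ W j x ^ 2 * ‖f x‖ ^ 2 ∂(volume.restrict (Ioo (-(W/2)) (W/2)))) := by rw [← s5]
  -- assembling
  have hps : ∀ k : ℤ, ‖∫ x, f x * (starRingEnd ℂ) (phiJK θ W j k x) ∂(volume.restrict (Ioo (-(W/2)) (W/2)))‖ ^ 2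
      = T^2 * ‖fourierCoeff (⇑gL) k‖ ^ 2 := by
    intro k
    rw [hcoeff k, norm_smul, Real.norm_eq_abs, abs_of_pos hT, mul_pow]
  constructor
  · exact Summable.congr (hsummable.mul_left (T^2)) fun k => (hps k).symm
  · calc ∑' k : ℤ, ‖∫ x, f x * (starRingEnd ℂ) (phiJK θ W j k x) ∂(volume.restrict (Ioo (-(W/2)) (W/2)))‖ ^ 2
        = ∑' k : ℤ, T^2 * ‖fourierCoeff (⇑gL) k‖ ^ 2 := tsum_congr hps
      _ = T^2 * ∑' k : ℤ, ‖fourierCoeff (⇑gL) k‖ ^ 2 := tsum_mul_left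
      _ = T^2 * ((1/T) * ((2/T) * ∫ x, thetaJ θ W j x ^ 2 * ‖f x‖ ^ 2 ∂(volume.restrict (Ioo (-(W/2)) (W/2))))) := by
          rw [hpars, hnorm]
      _ = 2 * ∫ x, thetaJ θ W j x ^ 2 * ‖f x‖ ^ 2 ∂(volume.restrict (Ioo (-(W/2)) (W/2))) := by
          field_simp

end Aux

/-- **Lemma 3.2.** The family `{φ_{j,k}}_{j,k ∈ ℤ}` is a tight frame for `L²(-W/2, W/2)`
with frame constants `A = B = 2`. -/
theorem stmt_6 (θ : ℝ → ℝ) (hθ : ContDiff ℝ (⊤ : ℕ∞) θ)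
    (hθ1 : ∀ x : ℝ, 1 ≤ x → θ x = 1) (hθ0 : ∀ x : ℝ, x ≤ -1 → θ x = 0)
    (hθsq : ∀ x : ℝ, θ (-x) ^ 2 + θ x ^ 2 = 1)
    (W : ℝ) (hW : 0 < W) :
    ∀ f : Lp ℂ 2 (volume.restrict (Set.Ioo (-(W/2)) (W/2))),
      ∑' jk : ℤ × ℤ,
        ‖∫ x, f x * (starRingEnd ℂ) (phiJK θ W jk.1 jk.2 x)
            ∂(volume.restrict (Set.Ioo (-(W/2)) (W/2)))‖ ^ 2 = 2 * ‖f‖ ^ 2 := by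
  intro f
  have hθc : Continuous θ := hθ.continuous
  -- the L² norm squared is the integral of the squared pointwise norm
  have hf2 : Integrable (fun x => ‖f x‖^2) (volume.restrict (Set.Ioo (-(W/2)) (W/2))) := by
    have h := (Lp.memLp f).integrable_norm_rpow two_ne_zero ENNReal.ofNat_ne_top
    simpa [ENNReal.toReal_ofNat, Real.rpow_natCast] using h
  have hnormf : ∫ x, ‖f x‖^2 ∂(volume.restrict (Set.Ioo (-(W/2)) (W/2))) = ‖f‖^2 := by
    have H₃ := congr_arg RCLike.re (L2.inner_def (𝕜 := ℂ) f f)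
    rw [← integral_re (L2.integrable_inner f f)] at H₃
    simp only [← norm_sq_eq_re_inner (𝕜 := ℂ)] at H₃
    exact H₃.symm
  -- notation for the block integrals
  set Q : ℤ → ℝ := fun j => ∫ x, thetaJ θ W j x ^ 2 * ‖f x‖ ^ 2 ∂(volume.restrict (Set.Ioo (-(W/2)) (W/2))) with hQ
  have hQnonneg : ∀ j, 0 ≤ Q j := fun j =>
    integral_nonneg fun x => by positivity
  have hblock := fun j : ℤ => blockSum hθc hθ1 hθ0 hθsq hW j f
  have hQint : ∀ j : ℤ, Integrable (fun x => thetaJ θ W j x ^ 2 * ‖f x‖ ^ 2) (volume.restrict (Set.Ioo (-(W/2)) (W/2))) := by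
    intro j
    have hm : AEStronglyMeasurable (fun x => thetaJ θ W j x ^ 2 * ‖f x‖ ^ 2) (volume.restrict (Set.Ioo (-(W/2)) (W/2))) :=
      (((continuous_thetaJ hθc j).pow 2).aestronglyMeasurable).mul
        ((Lp.stronglyMeasurable f).norm.aestronglyMeasurable.pow 2)
    refine hf2.mono hm (ae_of_all _ fun x => ?_)
    have h1 : |thetaJ θ W j x| ≤ 1 := abs_thetaJ_le_one hθsq j x
    have h2 : thetaJ θ W j x ^ 2 ≤ 1 := by
      rw [← _root_.sq_abs]
      nlinarith [abs_nonneg (thetaJ θ W j x)]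
    rw [Real.norm_eq_abs, Real.norm_eq_abs, _root_.abs_of_nonneg (by positivity : (0:ℝ) ≤ ‖f x‖^2),
      _root_.abs_of_nonneg (by positivity : (0:ℝ) ≤ thetaJ θ W j x ^ 2 * ‖f x‖ ^ 2)]
    nlinarith [sq_nonneg ‖f x‖]
  have hmeas : ∀ j : ℤ, AEMeasurable
      (fun x => ENNReal.ofReal (thetaJ θ W j x ^ 2 * ‖f x‖ ^ 2)) (volume.restrict (Set.Ioo (-(W/2)) (W/2))) := fun j =>
    (((continuous_thetaJ hθc j).pow 2).measurable.mul
      ((Lp.stronglyMeasurable f).measurable.norm.pow_const 2)).ennreal_ofReal.aemeasurable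
  have hQeq : ∑' j : ℤ, ENNReal.ofReal (Q j) = ENNReal.ofReal (∫ x, ‖f x‖^2 ∂(volume.restrict (Set.Ioo (-(W/2)) (W/2)))) := by
    have e1 : ∀ j : ℤ, ENNReal.ofReal (Q j)
        = ∫⁻ x, ENNReal.ofReal (thetaJ θ W j x ^ 2 * ‖f x‖ ^ 2) ∂(volume.restrict (Set.Ioo (-(W/2)) (W/2))) := fun j =>
      ofReal_integral_eq_lintegral_ofReal (hQint j) (ae_of_all _ fun x => by positivity)
    simp_rw [e1]
    rw [← lintegral_tsum hmeas]
    rw [ofReal_integral_eq_lintegral_ofReal hf2 (ae_of_all _ fun x => by positivity)]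
    apply lintegral_congr_ae
    filter_upwards [ae_restrict_mem measurableSet_Ioo] with x hx
    exact tsum_ofReal_thetaJ hW hθ1 hθ0 hθsq hx (by positivity)
  -- the ENNReal-valued computation
  set c : ℤ × ℤ → ℝ≥0 := fun jk =>
    ‖∫ x, f x * (starRingEnd ℂ) (phiJK θ W jk.1 jk.2 x) ∂(volume.restrict (Set.Ioo (-(W/2)) (W/2)))‖₊ ^ 2 with hc
  have hcoe : ∀ jk : ℤ × ℤ, ((c jk : ℝ≥0) : ℝ≥0∞)
      = ENNReal.ofReal (‖∫ x, f x * (starRingEnd ℂ) (phiJK θ W jk.1 jk.2 x) ∂(volume.restrict (Set.Ioo (-(W/2)) (W/2)))‖ ^ 2) := by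
    intro jk
    rw [hc]
    rw [ENNReal.ofReal_pow (norm_nonneg _), ofReal_norm, enorm_eq_nnnorm, ENNReal.coe_pow]
  have htotal : ∑' jk : ℤ × ℤ, ((c jk : ℝ≥0) : ℝ≥0∞) = ENNReal.ofReal (2 * ‖f‖^2) := by
    rw [ENNReal.tsum_prod']
    have h2 : ∀ j : ℤ, ∑' k : ℤ, ((c (j, k) : ℝ≥0) : ℝ≥0∞) = ENNReal.ofReal (2 * Q j) := by
      intro j
      have : ∑' k : ℤ, ((c (j, k) : ℝ≥0) : ℝ≥0∞)
          = ∑' k : ℤ, ENNReal.ofReal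
            (‖∫ x, f x * (starRingEnd ℂ) (phiJK θ W j k x) ∂(volume.restrict (Set.Ioo (-(W/2)) (W/2)))‖ ^ 2) :=
        tsum_congr fun k => hcoe (j, k)
      rw [this, ← ENNReal.ofReal_tsum_of_nonneg (fun k => by positivity) (hblock j).1,
        (hblock j).2]
    simp_rw [h2]
    have h3 : ∀ j : ℤ, ENNReal.ofReal (2 * Q j) = 2 * ENNReal.ofReal (Q j) := fun j => by
      rw [ENNReal.ofReal_mul (by norm_num)]
      norm_num
    simp_rw [h3]
    rw [ENNReal.tsum_mul_left, hQeq, hnormf,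
      ENNReal.ofReal_mul (by norm_num : (0:ℝ) ≤ 2), ENNReal.ofReal_ofNat]
  have hne : ∑' jk : ℤ × ℤ, ((c jk : ℝ≥0) : ℝ≥0∞) ≠ ⊤ := by
    rw [htotal]; exact ENNReal.ofReal_ne_top
  have hsumc : Summable c := ENNReal.tsum_coe_ne_top_iff_summable.mp hne
  have hfin : ((∑' jk : ℤ × ℤ, c jk : ℝ≥0) : ℝ≥0∞) = ENNReal.ofReal (2 * ‖f‖^2) := by
    rw [ENNReal.coe_tsum hsumc]; exact htotal
  have hreal : ((∑' jk : ℤ × ℤ, c jk : ℝ≥0) : ℝ) = 2 * ‖f‖^2 := by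
    have := congr_arg ENNReal.toReal hfin
    rwa [ENNReal.coe_toReal, ENNReal.toReal_ofReal (by positivity)] at this
  calc ∑' jk : ℤ × ℤ, ‖∫ x, f x * (starRingEnd ℂ) (phiJK θ W jk.1 jk.2 x) ∂(volume.restrict (Set.Ioo (-(W/2)) (W/2)))‖ ^ 2
      = ∑' jk : ℤ × ℤ, ((c jk : ℝ≥0) : ℝ) := by
        apply tsum_congr
        intro jk
        rw [hc]
        push_cast
        rfl
    _ = ((∑' jk : ℤ × ℤ, c jk : ℝ≥0) : ℝ) := (NNReal.coe_tsum).symm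
    _ = 2 * ‖f‖^2 := hreal
end
end

section
/- There exists a constant C_d > 0, depending only on the dimension d, such that for every compact set X ⊆ ℝ^d that is lower Ahlfors (d−1)-regular at scale η_X > 0 with constant κ_X, and every s > 0: |X + B_s(0)| ≤ (C_d/κ_X) · H^{d−1}(X) · s · (1 + s^{d−1}/η_X^{d−1}), where |·| denotes Lebesgue measure and X + B_s(0) is the open s-neighborhood of X. -/
/-!
Take `r = min (s / 2) η` and a maximal `2r`-separated subset `N` of `X`. The balls `B(x, r)`,
`x ∈ N`, are disjoint and each carries `H^{d-1}`-mass at least `κ r^{d-1}`, so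
`#N ≤ H^{d-1}(X) / (κ r^{d-1})`; the balls `B(x, 2r + s)` cover `X + B_s(0)`, so its volume is at
most `#N |B_1| (2s)^d`. The two values of the minimum produce the two terms of
`s (1 + s^{d-1} / η^{d-1})`.
-/

open MeasureTheory Set Filter
open scoped ENNReal NNReal Classical Pointwise

noncomputable section

/-- `X` is lower Ahlfors `(d-1)`-regular at scale `η` with constant `κ`. -/
def LowerAhlfors (d : ℕ) (X : Set (EuclideanSpace ℝ (Fin d))) (η κ : ℝ) : Prop :=
  ∀ x ∈ X, ∀ r : ℝ, 0 < r → r ≤ η →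
    ENNReal.ofReal (κ * r ^ ((d : ℝ) - 1)) ≤ μH[(d : ℝ) - 1] (X ∩ Metric.ball x r)

/-- `X` is maximally Ahlfors regular with constant `κ`: lower Ahlfors `(d-1)`-regular at the
scale `H^{d-1}(X)^{1/(d-1)}`. -/
def MaxAhlfors (d : ℕ) (X : Set (EuclideanSpace ℝ (Fin d))) (κ : ℝ) : Prop :=
  ∀ x ∈ X, ∀ r : ℝ, 0 < r →
    ENNReal.ofReal r ≤ (μH[(d : ℝ) - 1] X) ^ (1 / ((d : ℝ) - 1)) →
    ENNReal.ofReal (κ * r ^ ((d : ℝ) - 1)) ≤ μH[(d : ℝ) - 1] (X ∩ Metric.ball x r)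

/-- Membership in the lattice `L⁻¹ ℤ^d`. -/
def latticePt (d : ℕ) (L : ℝ) (x : EuclideanSpace ℝ (Fin d)) : Prop :=
  ∀ i, ∃ k : ℤ, x i = k / L

/-- The discretization `E_L = L⁻¹ℤ^d ∩ E` of a set `E ⊆ ℝ^d` at resolution `L`. -/
def discretization (d : ℕ) (L : ℝ) (E : Set (EuclideanSpace ℝ (Fin d))) :
    Set (EuclideanSpace ℝ (Fin d)) :=
  {x | x ∈ E ∧ latticePt d L x}

open Metric

theorem Metric.exists_finset_pairwiseDisjoint_ball_subset_iUnion_closedBall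
    {X : Type*} [MetricSpace X] {A : Set X} (hA : IsCompact A) {r : ℝ} (hr : 0 < r) :
    ∃ N : Finset X, ↑N ⊆ A ∧ (N : Set X).PairwiseDisjoint (ball · r) ∧
      A ⊆ ⋃ x ∈ N, closedBall x (2 * r) := by
  lift r to ℝ≥0 using hr.le
  have hpack : packingNumber (2 * r) A ≠ ⊤ := by
    obtain ⟨C, -, hCfin, hC⟩ := exists_finite_isCover_of_isCompact (by exact_mod_cast hr.ne') hA
    exact ((packingNumber_two_mul_le_externalCoveringNumber r A).trans
      hC.externalCoveringNumber_le_encard).trans_lt hCfin.encard_lt_top |>.ne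
  have hfin : (maximalSeparatedSet (2 * r) A).Finite := by
    rw [← encard_ne_top_iff, encard_maximalSeparatedSet hpack]
    exact hpack
  refine ⟨hfin.toFinset, by simpa using maximalSeparatedSet_subset, ?_, ?_⟩
  · intro x hx y hy hxy
    have hsep : ((2 * r : ℝ≥0) : ℝ≥0∞) < edist x y :=
      isSeparated_maximalSeparatedSet (by simpa using hx) (by simpa using hy) hxy
    rw [edist_dist, ← ENNReal.ofReal_coe_nnreal, ENNReal.ofReal_lt_ofReal_iff'] at hsep
    exact ball_disjoint_ball (by push_cast at hsep; linarith [hsep.1])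
  · simpa [isCover_iff_subset_iUnion_closedBall] using isCover_maximalSeparatedSet hpack

theorem Finset.card_mul_le_measure_of_pairwiseDisjoint {α ι : Type*} [MeasurableSpace α]
    {μ : Measure α} {X : Set α} (hX : MeasurableSet X) {N : Finset ι} {s : ι → Set α}
    (hs : ∀ i ∈ N, MeasurableSet (s i)) (hdisj : (N : Set ι).PairwiseDisjoint s) {c : ℝ≥0∞}
    (hc : ∀ i ∈ N, c ≤ μ (X ∩ s i)) : N.card * c ≤ μ X :=
  calc N.card * c = ∑ i ∈ N, c := by simp
    _ ≤ ∑ i ∈ N, μ (X ∩ s i) := Finset.sum_le_sum hc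
    _ = μ (⋃ i ∈ N, X ∩ s i) :=
      (measure_biUnion_finset (hdisj.mono fun _ ↦ Set.inter_subset_right)
        fun i hi ↦ hX.inter (hs i hi)).symm
    _ ≤ μ X := measure_mono (iUnion₂_subset fun _ _ ↦ Set.inter_subset_left)

section NormedSpace

variable {E : Type*} [NormedAddCommGroup E] [NormedSpace ℝ E]

theorem add_ball_zero_subset_iUnion_ball {X : Set E} {N : Finset E} {r s : ℝ} (hr : 0 ≤ r)
    (hs : 0 < s) (hcov : X ⊆ ⋃ x ∈ N, closedBall x r) :
    X + ball 0 s ⊆ ⋃ x ∈ N, ball x (r + s) :=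
  calc X + ball (0 : E) s ⊆ (⋃ x ∈ N, closedBall x r) + ball 0 s := add_subset_add_right hcov
    _ = ⋃ x ∈ N, ball x (r + s) := by
      simp only [iUnion₂_add, closedBall_add_ball hr hs, add_zero]

theorem Measure.addHaar_add_ball_le [MeasurableSpace E] [BorelSpace E] [FiniteDimensional ℝ E]
    (μ : Measure E) [μ.IsAddHaarMeasure] {X : Set E} {N : Finset E} {r s : ℝ} (hr : 0 ≤ r)
    (hs : 0 < s) (hcov : X ⊆ ⋃ x ∈ N, closedBall x r) :
    μ (X + ball 0 s) ≤ N.card * ENNReal.ofReal ((r + s) ^ Module.finrank ℝ E) * μ (ball 0 1) :=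
  calc μ (X + ball 0 s) ≤ μ (⋃ x ∈ N, ball x (r + s)) :=
        measure_mono (add_ball_zero_subset_iUnion_ball hr hs hcov)
    _ ≤ ∑ x ∈ N, μ (ball x (r + s)) := measure_biUnion_finset_le N _
    _ = N.card * ENNReal.ofReal ((r + s) ^ Module.finrank ℝ E) * μ (ball 0 1) := by
      simp [Measure.addHaar_ball_of_pos μ _ (by positivity : 0 < r + s), mul_assoc]

end NormedSpace

theorem two_mul_rpow_add_one_le_mul_min_rpow {p s η : ℝ} (hp : -1 ≤ p) (hs : 0 < s) (hη : 0 < η) :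
    (2 * s) ^ (p + 1) ≤ 4 ^ (p + 1) * s * (1 + s ^ p / η ^ p) * min (s / 2) η ^ p := by
  have hηp : 0 < η ^ p := Real.rpow_pos_of_pos hη p
  have hlhs : (2 * s) ^ (p + 1) = 2 ^ (p + 1) * (s * s ^ p) := by
    rw [Real.mul_rpow zero_le_two hs.le, Real.rpow_add_one hs.ne', mul_comm (s ^ p)]
  rcases le_total (s / 2) η with h | h
  · have h4 : (4 : ℝ) ^ (p + 1) = 2 ^ (p + 1) * (2 * 2 ^ p) := by
      rw [show (4 : ℝ) = 2 * 2 by norm_num, Real.mul_rpow zero_le_two zero_le_two,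
        Real.rpow_add_one two_ne_zero, mul_comm (2 ^ p)]
    have hq : 0 ≤ s ^ p / η ^ p := by positivity
    rw [min_eq_left h, Real.div_rpow hs.le zero_le_two, hlhs, h4]
    calc 2 ^ (p + 1) * (s * s ^ p) ≤ 2 ^ (p + 1) * (s * s ^ p) * (2 * (1 + s ^ p / η ^ p)) :=
          le_mul_of_one_le_right (by positivity) (by linarith)
      _ = 2 ^ (p + 1) * (2 * 2 ^ p) * s * (1 + s ^ p / η ^ p) * (s ^ p / 2 ^ p) := by
          field_simp
  · have h24 : (2 : ℝ) ^ (p + 1) ≤ 4 ^ (p + 1) :=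
      Real.rpow_le_rpow zero_le_two (by norm_num) (by linarith)
    rw [min_eq_right h, hlhs]
    calc 2 ^ (p + 1) * (s * s ^ p) ≤ 4 ^ (p + 1) * (s * (η ^ p + s ^ p)) := by gcongr; linarith
      _ = 4 ^ (p + 1) * s * (1 + s ^ p / η ^ p) * η ^ p := by field_simp

/-- **Lemma 2.1.** Volume bound for neighborhoods of lower Ahlfors regular compact sets:
`|X + B_s(0)| ≤ (C_d/κ_X) · H^{d-1}(X) · s · (1 + s^{d-1}/η_X^{d-1})`. -/
theorem stmt_7 (d : ℕ) :
    ∃ C : ℝ, 0 < C ∧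
      ∀ (X : Set (EuclideanSpace ℝ (Fin d))) (η κ s : ℝ),
        IsCompact X → 0 < η → 0 < κ → LowerAhlfors d X η κ → 0 < s →
        volume (X + Metric.ball (0 : EuclideanSpace ℝ (Fin d)) s) ≤
          ENNReal.ofReal (C / κ * s * (1 + s ^ ((d : ℝ) - 1) / η ^ ((d : ℝ) - 1))) *
            μH[(d : ℝ) - 1] X := by
  set V := (volume (ball (0 : EuclideanSpace ℝ (Fin d)) 1)).toReal
  have hV : 0 < V := ENNReal.toReal_pos (measure_ball_pos _ _ one_pos).ne' measure_ball_lt_top.ne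
  refine ⟨4 ^ d * V, by positivity, fun X η κ s hX hη hκ hA hs ↦ ?_⟩
  set p : ℝ := (d : ℝ) - 1
  set r := min (s / 2) η
  have hr : 0 < r := lt_min (half_pos hs) hη
  obtain ⟨N, hNX, hdisj, hcov⟩ :=
    exists_finset_pairwiseDisjoint_ball_subset_iUnion_closedBall hX hr
  have hmass : N.card * ENNReal.ofReal (κ * r ^ p) ≤ μH[p] X :=
    N.card_mul_le_measure_of_pairwiseDisjoint hX.measurableSet (fun _ _ ↦ measurableSet_ball)
      hdisj fun x hx ↦ hA x (hNX hx) r hr (min_le_right _ _)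
  have hd : p + 1 = d := by ring
  have hreal : (2 * r + s) ^ d * V ≤ 4 ^ d * V / κ * s * (1 + s ^ p / η ^ p) * (κ * r ^ p) :=
    calc (2 * r + s) ^ d * V ≤ (2 * s) ^ (p + 1) * V := by
          rw [hd, Real.rpow_natCast]
          gcongr
          linarith [min_le_left (s / 2) η]
      _ ≤ 4 ^ (p + 1) * s * (1 + s ^ p / η ^ p) * r ^ p * V := by
          gcongr
          exact two_mul_rpow_add_one_le_mul_min_rpow (by linarith [d.cast_nonneg (α := ℝ)]) hs hη
      _ = 4 ^ d * V / κ * s * (1 + s ^ p / η ^ p) * (κ * r ^ p) := by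
          rw [hd, Real.rpow_natCast]
          field_simp
  calc volume (X + ball 0 s)
      ≤ N.card * ENNReal.ofReal ((2 * r + s) ^ d) *
          volume (ball (0 : EuclideanSpace ℝ (Fin d)) 1) := by
        simpa using Measure.addHaar_add_ball_le volume (by positivity) hs hcov
    _ = N.card * ENNReal.ofReal ((2 * r + s) ^ d * V) := by
        rw [ENNReal.ofReal_mul (by positivity), ENNReal.ofReal_toReal measure_ball_lt_top.ne,
          mul_assoc]
    _ ≤ N.card * ENNReal.ofReal (4 ^ d * V / κ * s * (1 + s ^ p / η ^ p) * (κ * r ^ p)) := by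
        gcongr
    _ ≤ ENNReal.ofReal (4 ^ d * V / κ * s * (1 + s ^ p / η ^ p)) * μH[p] X := by
        rw [ENNReal.ofReal_mul (by positivity), mul_left_comm]
        gcongr
end
end

section
/- Let E ⊆ ℝ^d be a compact domain whose boundary ∂E is lower Ahlfors (d−1)-regular at scale η_{∂E} ≥ 1 with constant κ_{∂E}. Fix widths 0 < W_i ≤ L, i = 1,…,d, set W_max = max_i W_i, and for j ∈ ℤ^d let M_j = diag(|D_{j_1}^{(1)}|, …, |D_{j_d}^{(d)}|), where for each coordinate i the intervals D_{j}^{(i)} = I_j^{(i)} ∪ I_{j+1}^{(i)} arise from the dyadic decomposition of (−W_i/2, W_i/2) given by I_j^{(i)} = x_j^{(i)} + (W_i/(3·2^{|j|+1}))·[−1,1) with x_j^{(i)} = sign(j)·(W_i/2)·(1 − 2^{−|j|}). Then there exists a constant C_{d}, depending only on d, such that for every L ≥ W_max, every s ≥ 1 and every j ∈ ℤ^d: #{k ∈ ℤ^d : dist(k, M_j ∂E_L) < s} ≤ C_d · max{W_max, 1/η_{∂E}}^{d−1} · (|∂E|/κ_{∂E}) · s^d. -/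
open MeasureTheory Set Filter
open scoped ENNReal NNReal Classical

noncomputable section

/-- The discrete boundary `∂E_L` of the discretization `E_L`: points of `E_L` at distance
exactly `1/L` from `E_L^c = L⁻¹ℤ^d ∖ E_L`. -/
def dBdryL (d : ℕ) (L : ℝ) (E : Set (EuclideanSpace ℝ (Fin d))) :
    Set (EuclideanSpace ℝ (Fin d)) :=
  {x | x ∈ discretization d L E ∧
    ∃ y : EuclideanSpace ℝ (Fin d), latticePt d L y ∧ y ∉ E ∧ dist x y = 1 / L}

/-- Euclidean distance from the integer point `k` to the point `M_j y`, where
`M_j = diag(|D_{j_1}|, …, |D_{j_d}|)`. -/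
def Mdist (d : ℕ) (W : Fin d → ℝ) (j k : Fin d → ℤ) (y : EuclideanSpace ℝ (Fin d)) : ℝ :=
  Real.sqrt (∑ i, ((k i : ℝ) - lenD (W i) (j i) * y i) ^ 2)

/-!
If `k` is within `s` of `M_j x` with `x ∈ ∂E_L`, then `x` is `1/L`-close to a point `z ∈ ∂E`
(along the segment to its lattice neighbour outside `E`), and since `|D_j^{(i)}| ≤ W_i ≤ L`,
every coordinate of `k - M_j z` is below `s + 1`. Put `r = 1 / max(W_max, 1/η) ≤ η`: lower
Ahlfors regularity gives `H^{d-1}(∂E ∩ B(z_k, r)) ≥ κ r^{d-1}` for each such `k`, while a point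
`w ∈ B(z_k, r)` forces every coordinate of `k - M_j w` below `s + 2`, so `w` lies in at most
`(2s + 5)^d ≤ (7s)^d` of these balls. Summing over `k` gives `κ r^{d-1} #K ≤ (7s)^d |∂E|`.
-/

theorem exists_mem_frontier_dist_le {E : Type*} [NormedAddCommGroup E] [NormedSpace ℝ E]
    {s : Set E} {x y : E} (hx : x ∈ s) (hy : y ∉ s) :
    ∃ z ∈ frontier s, dist x z ≤ dist x y := by
  let γ : unitInterval → E := fun t => AffineMap.lineMap x y (t : ℝ)
  have hγ : Continuous γ := by fun_prop
  obtain ⟨t, ht⟩ : (frontier (γ ⁻¹' s)).Nonempty :=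
    nonempty_frontier_iff.2 ⟨⟨0, by simpa [γ] using hx⟩,
      fun h => hy (by simpa [γ] using h.symm.subset (Set.mem_univ (1 : unitInterval)))⟩
  refine ⟨γ t, hγ.frontier_preimage_subset s ht, ?_⟩
  rw [dist_left_lineMap, Real.norm_eq_abs, abs_of_nonneg t.2.1]
  exact mul_le_of_le_one_left dist_nonneg t.2.2

theorem natCard_mul_le_mul_measure_of_multiplicity_le {α ι : Type*} [MeasurableSpace α]
    [Finite ι] (μ : Measure α) (S : Set α) {A : ι → Set α} (hA : ∀ k, MeasurableSet (A k))
    {m N : ℝ≥0∞} (hm : ∀ k, m ≤ μ (S ∩ A k)) (hN : ∀ w, ({k | w ∈ A k}.ncard : ℝ≥0∞) ≤ N) :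
    Nat.card ι * m ≤ N * μ S := by
  have := Fintype.ofFinite ι
  have hcount : ∀ w, ∑ k, (A k).indicator 1 w = ({k | w ∈ A k}.ncard : ℝ≥0∞) := by
    intro w
    simp [Set.indicator_apply, Finset.sum_boole, Set.ncard_eq_toFinset_card']
  calc Nat.card ι * m = ∑ _k : ι, m := by simp [Nat.card_eq_fintype_card]
    _ ≤ ∑ k, μ.restrict S (A k) := Finset.sum_le_sum fun k _ => by
        rw [Measure.restrict_apply (hA k), Set.inter_comm]; exact hm k
    _ = ∫⁻ w, ∑ k, (A k).indicator 1 w ∂μ.restrict S := by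
        rw [lintegral_finsetSum (f := fun k => (A k).indicator 1) _
          fun k _ => measurable_const.indicator (hA k)]
        simp only [lintegral_indicator_one (hA _)]
    _ ≤ ∫⁻ _w, N ∂μ.restrict S := lintegral_mono fun w => (hcount w).trans_le (hN w)
    _ = N * μ S := by rw [lintegral_const, Measure.restrict_apply_univ]

def intCube {ι : Type*} (c : ι → ℝ) (t : ℝ) : Set (ι → ℤ) :=
  {k | ∀ i, |(k i : ℝ) - c i| < t}

section intCube

variable {ι : Type*} [Fintype ι]

theorem intCube_subset_piFinset (c : ι → ℝ) (t : ℝ) :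
    intCube c t ⊆ Fintype.piFinset (fun i => Finset.Icc ⌈c i - t⌉ ⌊c i + t⌋) := by
  intro k hk
  simp only [Finset.mem_coe, Fintype.mem_piFinset, Finset.mem_Icc]
  intro i
  have h := abs_lt.1 (hk i)
  exact ⟨Int.ceil_le.2 (by linarith), Int.le_floor.2 (by linarith)⟩

theorem finite_intCube (c : ι → ℝ) (t : ℝ) : (intCube c t).Finite :=
  (Finset.finite_toSet _).subset (intCube_subset_piFinset c t)

theorem card_Icc_ceil_floor_le (a t : ℝ) (ht : 0 ≤ t) :
    ((Finset.Icc ⌈a - t⌉ ⌊a + t⌋).card : ℝ) ≤ 2 * t + 1 := by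
  rw [Int.card_Icc, ← Int.cast_natCast, Int.toNat_eq_max]
  push_cast
  exact max_le (by linarith [Int.floor_le (a + t), Int.le_ceil (a - t)]) (by linarith)

theorem ncard_intCube_le (c : ι → ℝ) {t : ℝ} (ht : 0 ≤ t) :
    ((intCube c t).ncard : ℝ) ≤ (2 * t + 1) ^ Fintype.card ι := by
  calc ((intCube c t).ncard : ℝ)
      ≤ (Fintype.piFinset (fun i => Finset.Icc ⌈c i - t⌉ ⌊c i + t⌋)).card := by
        rw [← Set.ncard_coe_finset]
        exact_mod_cast Set.ncard_le_ncard (intCube_subset_piFinset c t) (Finset.finite_toSet _)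
    _ = ∏ i, ((Finset.Icc ⌈c i - t⌉ ⌊c i + t⌋).card : ℝ) := by
        rw [Fintype.card_piFinset, Nat.cast_prod]
    _ ≤ ∏ _i : ι, (2 * t + 1) :=
        Finset.prod_le_prod (fun _ _ => by positivity) fun i _ => card_Icc_ceil_floor_le _ _ ht
    _ = (2 * t + 1) ^ Fintype.card ι := by rw [Finset.prod_const, Finset.card_univ]

theorem intCube_mul_subset {a : ι → ℝ} (ha : ∀ i, 0 ≤ a i)
    {z w : EuclideanSpace ℝ ι} {t δ : ℝ} (h : ∀ i, a i * dist z w ≤ δ) :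
    intCube (fun i => a i * z i) t ⊆ intCube (fun i => a i * w i) (t + δ) := by
  intro k hk i
  have hzw : |z i - w i| ≤ dist z w := by
    simpa only [Real.dist_eq] using PiLp.dist_apply_le z w i
  calc |(k i : ℝ) - a i * w i|
      ≤ |(k i : ℝ) - a i * z i| + |a i * z i - a i * w i| := abs_sub_le _ _ _
    _ = |(k i : ℝ) - a i * z i| + a i * |z i - w i| := by
        rw [← mul_sub, abs_mul, abs_of_nonneg (ha i)]
    _ < t + δ := by
        linarith [hk i, mul_le_mul_of_nonneg_left hzw (ha i), h i]

theorem finite_of_forall_mem_intCube {a : ι → ℝ} {M t : ℝ}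
    (ha : ∀ i, 0 ≤ a i) (haM : ∀ i, a i ≤ M) (hM : 0 ≤ M) {X : Set (EuclideanSpace ℝ ι)}
    (hX : Bornology.IsBounded X) {K : Set (ι → ℤ)} {z : K → EuclideanSpace ℝ ι}
    (hzX : ∀ k, z k ∈ X) (hz : ∀ k : K, (k : ι → ℤ) ∈ intCube (fun i => a i * z k i) t) :
    K.Finite := by
  obtain ⟨R, hR⟩ := hX.exists_norm_le
  refine (finite_intCube (fun i => a i * (0 : EuclideanSpace ℝ ι) i) (t + M * R)).subset
    fun k hk => intCube_mul_subset ha (fun i => ?_) (hz ⟨k, hk⟩)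
  rw [dist_zero_right]
  exact mul_le_mul (haM i) (hR _ (hzX _)) (norm_nonneg _) hM

theorem ncard_setOf_mem_ball_le {a : ι → ℝ} (ha : ∀ i, 0 ≤ a i)
    {r t : ℝ} (har : ∀ i, a i * r ≤ 1) (ht : 0 ≤ t) {K : Set (ι → ℤ)}
    {z : K → EuclideanSpace ℝ ι} (hz : ∀ k : K, (k : ι → ℤ) ∈ intCube (fun i => a i * z k i) t)
    (w : EuclideanSpace ℝ ι) :
    ({k | w ∈ Metric.ball (z k) r}.ncard : ℝ) ≤ (2 * (t + 1) + 1) ^ Fintype.card ι := by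
  have hsub : ∀ k ∈ {k | w ∈ Metric.ball (z k) r},
      (k : ι → ℤ) ∈ intCube (fun i => a i * w i) (t + 1) := fun k hk =>
    intCube_mul_subset ha (fun i => (mul_le_mul_of_nonneg_left (Metric.mem_ball'.1 hk).le
      (ha i)).trans (har i)) (hz k)
  calc ({k | w ∈ Metric.ball (z k) r}.ncard : ℝ)
      ≤ (intCube (fun i => a i * w i) (t + 1)).ncard := by
        exact_mod_cast Set.ncard_le_ncard_of_injOn Subtype.val hsub Subtype.val_injective.injOn
          (finite_intCube _ _)
    _ ≤ (2 * (t + 1) + 1) ^ Fintype.card ι := ncard_intCube_le _ (by linarith)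

end intCube

theorem ofReal_mul_natCast_le_of_inv_rpow {κ M c p : ℝ} {n : ℕ} {μ : ℝ≥0∞} (hκ : 0 ≤ κ)
    (hM : 0 < M) (h : n * ENNReal.ofReal (κ * M⁻¹ ^ p) ≤ ENNReal.ofReal c * μ) :
    ENNReal.ofReal (κ * n) ≤ ENNReal.ofReal (c * M ^ p) * μ := by
  have hMp : 0 ≤ M ^ p := Real.rpow_nonneg hM.le p
  calc ENNReal.ofReal (κ * n)
      = n * ENNReal.ofReal (κ * M⁻¹ ^ p) * ENNReal.ofReal (M ^ p) := by
        rw [mul_assoc, ← ENNReal.ofReal_mul (by positivity), mul_assoc, Real.inv_rpow hM.le,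
          inv_mul_cancel₀ (Real.rpow_pos_of_pos hM p).ne', mul_one, ENNReal.ofReal_mul hκ,
          ENNReal.ofReal_natCast, mul_comm]
    _ ≤ ENNReal.ofReal c * μ * ENNReal.ofReal (M ^ p) := mul_le_mul_left h _
    _ = ENNReal.ofReal (c * M ^ p) * μ := by
        rw [ENNReal.ofReal_mul' hMp, mul_right_comm]

theorem lenD_nonneg {W : ℝ} (hW : 0 ≤ W) (j : ℤ) : 0 ≤ lenD W j := by
  unfold lenD lenI
  positivity

theorem lenD_le {W : ℝ} (hW : 0 ≤ W) (j : ℤ) : lenD W j ≤ W := by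
  have hI : ∀ m : ℤ, lenI W m ≤ W / 3 := fun m =>
    div_le_div_of_nonneg_left hW (by norm_num) (le_mul_of_one_le_right (by norm_num)
      (one_le_pow₀ one_le_two))
  linarith [hI j, hI (j + 1), show lenD W j = lenI W j + lenI W (j + 1) from rfl]

theorem mem_intCube_of_Mdist_lt {d : ℕ} {W : Fin d → ℝ} {j k : Fin d → ℤ}
    {x : EuclideanSpace ℝ (Fin d)} {s : ℝ} (h : Mdist d W j k x < s) :
    k ∈ intCube (fun i => lenD (W i) (j i) * x i) s := by
  intro i
  refine lt_of_le_of_lt ?_ h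
  rw [Mdist, ← Real.sqrt_sq_eq_abs]
  exact Real.sqrt_le_sqrt (Finset.single_le_sum
    (f := fun i => ((k i : ℝ) - lenD (W i) (j i) * x i) ^ 2) (fun _ _ => sq_nonneg _)
    (Finset.mem_univ i))

theorem exists_mem_frontier_mem_intCube {d : ℕ} {L s : ℝ} {E : Set (EuclideanSpace ℝ (Fin d))}
    {W : Fin d → ℝ} {j k : Fin d → ℤ} (hW : ∀ i, 0 < W i) (hWL : ∀ i, W i ≤ L)
    {x : EuclideanSpace ℝ (Fin d)} (hx : x ∈ dBdryL d L E) (hk : Mdist d W j k x < s) :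
    ∃ z ∈ frontier E, k ∈ intCube (fun i => lenD (W i) (j i) * z i) (s + 1) := by
  obtain ⟨⟨hxE, -⟩, y, -, hyE, hxy⟩ := hx
  obtain ⟨z, hz, hxz⟩ := exists_mem_frontier_dist_le hxE hyE
  refine ⟨z, hz, intCube_mul_subset (fun i => lenD_nonneg (hW i).le _) (fun i => ?_)
    (mem_intCube_of_Mdist_lt hk)⟩
  have hL : 0 < L := (hW i).trans_le (hWL i)
  calc lenD (W i) (j i) * dist x z ≤ L * (1 / L) :=
        mul_le_mul ((lenD_le (hW i).le _).trans (hWL i)) (hxz.trans hxy.le) dist_nonneg hL.le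
    _ = 1 := mul_one_div_cancel hL.ne'

theorem LowerAhlfors.natCard_mul_le {d : ℕ} {X : Set (EuclideanSpace ℝ (Fin d))} {η κ r : ℝ}
    (hX : LowerAhlfors d X η κ) (hr : 0 < r) (hrη : r ≤ η) {ι : Type*} [Finite ι]
    {z : ι → EuclideanSpace ℝ (Fin d)} (hz : ∀ k, z k ∈ X) {N : ℝ≥0∞}
    (hN : ∀ w, ({k | w ∈ Metric.ball (z k) r}.ncard : ℝ≥0∞) ≤ N) :
    Nat.card ι * ENNReal.ofReal (κ * r ^ ((d : ℝ) - 1)) ≤ N * μH[(d : ℝ) - 1] X :=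
  natCard_mul_le_mul_measure_of_multiplicity_le _ X (fun _ => measurableSet_ball)
    (fun k => hX (z k) (hz k) r hr hrη) hN

/-- **Lemma 3.3.** Counting integer points near `M_j ∂E_L`:
`#{k ∈ ℤ^d : dist(k, M_j ∂E_L) < s} ≤ C_d max{W_max, 1/η_{∂E}}^{d-1} (|∂E|/κ_{∂E}) s^d`. -/
theorem stmt_9 (d : ℕ) :
    ∃ C : ℝ, 0 < C ∧
      ∀ (E : Set (EuclideanSpace ℝ (Fin d))) (η κ L s : ℝ) (W : Fin d → ℝ) (j : Fin d → ℤ),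
        IsCompact E → 1 ≤ η → 0 < κ → LowerAhlfors d (frontier E) η κ →
        (∀ i, 0 < W i) → (∀ i, W i ≤ L) → 1 ≤ s →
        {k : Fin d → ℤ | ∃ x ∈ dBdryL d L E, Mdist d W j k x < s}.Finite ∧
        ENNReal.ofReal (κ * ({k : Fin d → ℤ | ∃ x ∈ dBdryL d L E, Mdist d W j k x < s}.ncard : ℝ)) ≤
          ENNReal.ofReal (C * max (⨆ i, W i) (1 / η) ^ ((d : ℝ) - 1) * s ^ d) *
            μH[(d : ℝ) - 1] (frontier E) := by
  refine ⟨7 ^ d, by positivity, ?_⟩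
  intro E η κ L s W j hE hη hκ hAhl hW hWL hs
  set K := {k : Fin d → ℤ | ∃ x ∈ dBdryL d L E, Mdist d W j k x < s}
  set a : Fin d → ℝ := fun i => lenD (W i) (j i)
  set M := max (⨆ i, W i) (1 / η)
  have hη₀ : 0 < η := one_pos.trans_le hη
  have hM : 0 < M := lt_max_of_lt_right (by positivity)
  have ha : ∀ i, 0 ≤ a i := fun i => lenD_nonneg (hW i).le _
  have haM : ∀ i, a i ≤ M := fun i => (lenD_le (hW i).le _).trans
    ((le_ciSup (Set.finite_range W).bddAbove i).trans (le_max_left _ _))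
  have hnear : ∀ k : K, ∃ z ∈ frontier E,
      (k : Fin d → ℤ) ∈ intCube (fun i => a i * z i) (s + 1) :=
    fun ⟨_, _, hx, hk⟩ => exists_mem_frontier_mem_intCube hW hWL hx hk
  choose z hzE hzk using hnear
  have hfin : K.Finite := finite_of_forall_mem_intCube ha haM hM.le hE.isBounded
    (fun k => hE.isClosed.frontier_subset (hzE k)) hzk
  have := hfin.to_subtype
  have haM' : ∀ i, a i * M⁻¹ ≤ 1 := fun i =>
    (mul_le_mul_of_nonneg_right (haM i) (inv_pos.2 hM).le).trans_eq (mul_inv_cancel₀ hM.ne')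
  have hmult : ∀ w, ({k | w ∈ Metric.ball (z k) M⁻¹}.ncard : ℝ≥0∞) ≤
      ENNReal.ofReal ((7 * s) ^ d) := by
    intro w
    rw [← ENNReal.ofReal_natCast]
    refine ENNReal.ofReal_le_ofReal
      ((ncard_setOf_mem_ball_le ha haM' (by linarith) hzk w).trans ?_)
    rw [Fintype.card_fin]
    exact pow_le_pow_left₀ (by linarith) (by linarith) d
  have hrη : M⁻¹ ≤ η := inv_le_of_inv_le₀ hη₀ (by rw [← one_div]; exact le_max_right _ _)
  have hpack := hAhl.natCard_mul_le (inv_pos.2 hM) hrη hzE hmult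
  rw [Nat.card_coe_set_eq] at hpack
  refine ⟨hfin, (ofReal_mul_natCast_le_of_inv_rpow hκ.le hM hpack).trans_eq ?_⟩
  rw [mul_pow]
  ring_nf
end
end

section
/- Let S be a compact positive self-adjoint operator on a Hilbert space with 0 ≤ S ≤ Id, let 0 < p ≤ 1 and ε ∈ (0,1/2), and suppose S − S² belongs to the Schatten p-class. Then the number of eigenvalues of S in (ε, 1−ε), counted with multiplicity, satisfies #M_ε(S) ≤ ‖S − S²‖_p^p / (ε − ε²)^p. -/
/-!
Let `α ≤ β` be indices with `ε < eigSeq S β` and `eigSeq S α < 1 - ε`. Continuous cut-offs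
`ψ₁ ≈ 1_(ε, ∞)` and `ψ₂ ≈ 1_[1-ε, ∞)` of the spectrum satisfy `rank ψ₁(S) ≥ β + 1` and
`rank ψ₂(S) ≤ α`, so `g = ψ₁ - ψ₂`, supported in `(ε, 1 - ε)`, has `rank g(S) ≥ β - α + 1`.
Since `t - t² ≥ ε - ε²` on `(ε, 1 - ε)`, we get `S - S² ≥ ε - ε²` on the range of `g(S)`, and the
min-max principle makes the first `β - α + 1` approximation numbers of `S - S²` at least
`ε - ε²`. With `α = min M`, `β = max M` this bounds `#M (ε - ε²)^p` by the Schatten sum; the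
same estimate for arbitrary `β ∈ M` shows that `M` is bounded.
-/

open MeasureTheory Set Filter
open scoped ENNReal NNReal Classical

noncomputable section

section approximationNumbers

variable {H : Type*} [NormedAddCommGroup H] [NormedSpace ℂ H]

theorem eigSeq_set_nonempty (S : H →L[ℂ] H) (n : ℕ) :
    {r : ℝ | ∃ S₀ : H →L[ℂ] H,
      (S₀ : H →ₗ[ℂ] H).rank < ((n + 1 : ℕ) : Cardinal) ∧ r = ‖S - S₀‖}.Nonempty :=
  ⟨_, 0, by simp, rfl⟩

theorem eigSeq_le_norm_sub (S F : H →L[ℂ] H) {n : ℕ}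
    (hF : (F : H →ₗ[ℂ] H).rank < ((n + 1 : ℕ) : Cardinal)) : eigSeq S n ≤ ‖S - F‖ :=
  csInf_le ⟨0, by rintro r ⟨S₀, -, rfl⟩; positivity⟩ ⟨F, hF, rfl⟩

theorem le_eigSeq {S : H →L[ℂ] H} {n : ℕ} {c : ℝ}
    (h : ∀ F : H →L[ℂ] H, (F : H →ₗ[ℂ] H).rank < ((n + 1 : ℕ) : Cardinal) → c ≤ ‖S - F‖) :
    c ≤ eigSeq S n :=
  le_csInf (eigSeq_set_nonempty S n) (by rintro r ⟨F, hF, rfl⟩; exact h F hF)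

theorem eigSeq_nonneg (S : H →L[ℂ] H) (n : ℕ) : 0 ≤ eigSeq S n :=
  le_eigSeq fun _ _ => norm_nonneg _

theorem eigSeq_antitone (S : H →L[ℂ] H) : Antitone (eigSeq S) := fun _ _ hmn =>
  le_eigSeq fun F hF => eigSeq_le_norm_sub S F (hF.trans_le (by gcongr))

theorem le_rank_of_norm_sub_lt_eigSeq {S F : H →L[ℂ] H} {n : ℕ} (h : ‖S - F‖ < eigSeq S n) :
    ((n + 1 : ℕ) : Cardinal) ≤ (F : H →ₗ[ℂ] H).rank :=
  not_lt.1 fun hF => (eigSeq_le_norm_sub S F hF).not_gt h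

theorem exists_mem_ne_zero_apply_eq_zero {W : Submodule ℂ H} {F : H →ₗ[ℂ] H}
    (h : F.rank < Module.rank ℂ W) : ∃ x ∈ W, x ≠ 0 ∧ F x = 0 := by
  by_contra! hker
  have hinj : Function.Injective (F ∘ₗ W.subtype) := by
    refine (injective_iff_map_eq_zero _).2 fun x hx => Subtype.ext ?_
    by_contra hx0
    exact hker x x.2 hx0 hx
  refine h.not_ge ?_
  rw [← rank_range_of_injective _ hinj]
  exact LinearMap.rank_comp_le_left _ _

end approximationNumbers

def ramp (a b t : ℝ) : ℝ := max 0 (min 1 ((t - a) / (b - a)))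

theorem continuous_ramp (a b : ℝ) : Continuous (ramp a b) := by
  unfold ramp; fun_prop

theorem ramp_nonneg (a b t : ℝ) : 0 ≤ ramp a b t := le_max_left _ _

theorem ramp_le_one (a b t : ℝ) : ramp a b t ≤ 1 := max_le zero_le_one (min_le_left _ _)

theorem ramp_of_le {a b t : ℝ} (hab : a ≤ b) (ht : t ≤ a) : ramp a b t = 0 :=
  max_eq_left <| (min_le_right _ _).trans <| div_nonpos_of_nonpos_of_nonneg (by linarith)
    (by linarith)

theorem ramp_of_ge {a b t : ℝ} (hab : a < b) (ht : b ≤ t) : ramp a b t = 1 := by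
  rw [ramp, min_eq_left, max_eq_right zero_le_one]
  rw [le_div_iff₀ (by linarith)]
  linarith

theorem lt_of_ramp_ne_zero {a b t : ℝ} (hab : a ≤ b) (h : ramp a b t ≠ 0) : a < t :=
  not_le.1 fun ht => h (ramp_of_le hab ht)

theorem mem_Ioo_of_ramp_sub_ramp_ne_zero {a b c d t : ℝ} (hab : a < b) (hcd : c < d)
    (hac : a ≤ c) (hbd : b ≤ d) (h : ramp a b t - ramp c d t ≠ 0) : t ∈ Set.Ioo a d := by
  constructor
  · by_contra! hta
    exact h (by rw [ramp_of_le hab.le hta, ramp_of_le hcd.le (hta.trans hac), sub_zero])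
  · by_contra! htd
    exact h (by rw [ramp_of_ge hab (hbd.trans htd), ramp_of_ge hcd htd, sub_self])

theorem abs_sub_mul_ramp_le {a b t : ℝ} (ha : 0 ≤ a) (hab : a < b) (ht : 0 ≤ t) :
    |t - t * ramp a b t| ≤ b := by
  rcases le_or_gt t b with htb | htb
  · have := ramp_nonneg a b t
    have := ramp_le_one a b t
    rw [abs_of_nonneg (by nlinarith)]
    nlinarith
  · simp [ramp_of_ge hab htb.le, ha.trans hab.le]

theorem LinearMap.natCast_le_rank_of_le_rank_add {K V V' : Type*} [DivisionRing K]
    [AddCommGroup V] [Module K V] [AddCommGroup V'] [Module K V'] {F G : V →ₗ[K] V'} {k l : ℕ}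
    (h : ((k + l : ℕ) : Cardinal) ≤ (F + G).rank) (hG : G.rank ≤ l) : (k : Cardinal) ≤ F.rank := by
  rw [← Cardinal.add_nat_le_add_nat_iff l, ← Nat.cast_add]
  exact h.trans ((LinearMap.rank_add_le F G).trans (by gcongr))

section innerProduct

variable {H : Type*} [NormedAddCommGroup H] [InnerProductSpace ℂ H]
open scoped InnerProductSpace

theorem le_eigSeq_of_le_re_inner {T : H →L[ℂ] H} {W : Submodule ℂ H} {n : ℕ} {c : ℝ}
    (hW : ((n + 1 : ℕ) : Cardinal) ≤ Module.rank ℂ W)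
    (h : ∀ x ∈ W, c * ‖x‖ ^ 2 ≤ RCLike.re ⟪T x, x⟫_ℂ) : c ≤ eigSeq T n := by
  refine le_eigSeq fun F hF => ?_
  obtain ⟨x, hxW, hx0, hFx⟩ := exists_mem_ne_zero_apply_eq_zero (hF.trans_le hW)
  have hTx : (T - F) x = T x := by simp [show F x = 0 from hFx]
  have hx : 0 < ‖x‖ ^ 2 := by positivity
  refine le_of_mul_le_mul_right ?_ hx
  calc c * ‖x‖ ^ 2 ≤ RCLike.re ⟪(T - F) x, x⟫_ℂ := hTx ▸ h x hxW
    _ ≤ ‖(T - F) x‖ * ‖x‖ := (RCLike.re_le_norm _).trans (norm_inner_le_norm _ _)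
    _ ≤ ‖T - F‖ * ‖x‖ * ‖x‖ := by gcongr; exact (T - F).le_opNorm x
    _ = ‖T - F‖ * ‖x‖ ^ 2 := by ring

variable [CompleteSpace H]

theorem le_re_inner_cfc_of_mem_range {S : H →L[ℂ] H} (hS : IsSelfAdjoint S) {ψ φ : ℝ → ℝ}
    (hψ : Continuous ψ) (hφ : Continuous φ) {u : ℝ}
    (h : ∀ t ∈ spectrum ℝ S, ψ t ≠ 0 → u ≤ φ t) {x : H}
    (hx : x ∈ LinearMap.range ((cfc ψ S : H →L[ℂ] H) : H →ₗ[ℂ] H)) :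
    u * ‖x‖ ^ 2 ≤ RCLike.re ⟪cfc φ S x, x⟫_ℂ := by
  obtain ⟨y, rfl⟩ := hx
  set A := cfc ψ S
  have hA : IsSelfAdjoint A := cfc_predicate ψ S
  have hprod : cfc (fun t => ψ t * ((φ t - u) * ψ t)) S
      = A * ((cfc φ S - algebraMap ℝ _ u) * A) := by
    rw [cfc_mul ψ _ S, cfc_mul (fun t => φ t - u) ψ S, cfc_sub φ (fun _ => u) S, cfc_const u S]
  have hpos : (A * ((cfc φ S - algebraMap ℝ _ u) * A)).IsPositive := by
    rw [← ContinuousLinearMap.nonneg_iff_isPositive, ← hprod]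
    refine cfc_nonneg fun t ht => ?_
    by_cases hψt : ψ t = 0
    · simp [hψt]
    · nlinarith [h t ht hψt, mul_self_nonneg (ψ t)]
  have hsymm : ⟪(A * ((cfc φ S - algebraMap ℝ _ u) * A)) y, y⟫_ℂ
      = ⟪cfc φ S (A y), A y⟫_ℂ - u * ⟪A y, A y⟫_ℂ := by
    calc _ = ⟪((cfc φ S - algebraMap ℝ _ u) * A) y, A y⟫_ℂ := hA.isSymmetric _ _
      _ = _ := by simp [Algebra.algebraMap_eq_smul_one]
  have hnonneg := hpos.re_inner_nonneg_left y
  have hre : RCLike.re ((u : ℂ) * ⟪A y, A y⟫_ℂ) = u * ‖A y‖ ^ 2 := by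
    rw [← inner_self_eq_norm_sq (𝕜 := ℂ)]
    simp
  rw [hsymm, map_sub, hre] at hnonneg
  exact sub_nonneg.1 hnonneg

theorem rank_cfc_lt_of_eigSeq_lt {S : H →L[ℂ] H} (hS : IsSelfAdjoint S) {ψ : ℝ → ℝ}
    (hψ : Continuous ψ) {u : ℝ} (h : ∀ t ∈ spectrum ℝ S, ψ t ≠ 0 → u ≤ t) {n : ℕ}
    (hn : eigSeq S n < u) :
    ((cfc ψ S : H →L[ℂ] H) : H →ₗ[ℂ] H).rank < ((n + 1 : ℕ) : Cardinal) := by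
  by_contra! hrank
  refine hn.not_ge (le_eigSeq_of_le_re_inner hrank fun x hx => ?_)
  simpa only [cfc_id ℝ S] using le_re_inner_cfc_of_mem_range hS hψ continuous_id h hx

theorem le_rank_cfc_of_lt_eigSeq {S : H →L[ℂ] H} (hS : IsSelfAdjoint S) {ψ : ℝ → ℝ}
    (hψ : Continuous ψ) {v : ℝ} (hv : 0 ≤ v) (h : ∀ t ∈ spectrum ℝ S, |t - t * ψ t| ≤ v)
    {n : ℕ} (hn : v < eigSeq S n) :
    ((n + 1 : ℕ) : Cardinal) ≤ ((cfc ψ S : H →L[ℂ] H) : H →ₗ[ℂ] H).rank := by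
  have hcfc : cfc (fun t => t - t * ψ t) S = S - S * cfc ψ S := by
    rw [cfc_sub _ _ S, cfc_mul _ _ S, cfc_id' ℝ S]
  have hnorm : ‖S - S * cfc ψ S‖ ≤ v := hcfc ▸ norm_cfc_le hv h
  exact (le_rank_of_norm_sub_lt_eigSeq (hnorm.trans_lt hn)).trans
    (LinearMap.rank_comp_le_right _ _)

theorem le_eigSeq_sub_mul_self {S : H →L[ℂ] H} (hS : S.IsPositive) {ε : ℝ} (hε : 0 ≤ ε)
    {α β m : ℕ} (hβ : ε < eigSeq S β) (hα : eigSeq S α < 1 - ε) (hm : α + m ≤ β) :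
    ε - ε ^ 2 ≤ eigSeq (S - S * S) m := by
  have hSa : IsSelfAdjoint S := hS.isSelfAdjoint
  have hβα : eigSeq S β ≤ eigSeq S α := eigSeq_antitone S (by omega)
  obtain ⟨v, hεv, hvβ⟩ := exists_between hβ
  obtain ⟨u, hαu, hu⟩ := exists_between hα
  -- Continuous stand-ins for the indicators of `(ε, ∞)` and `[1 - ε, ∞)`.
  set ψ₁ : ℝ → ℝ := ramp ε v
  set ψ₂ : ℝ → ℝ := ramp u (1 - ε)
  have hψ₁ : Continuous ψ₁ := continuous_ramp _ _
  have hψ₂ : Continuous ψ₂ := continuous_ramp _ _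
  have hrank₁ : ((β + 1 : ℕ) : Cardinal) ≤ ((cfc ψ₁ S : H →L[ℂ] H) : H →ₗ[ℂ] H).rank :=
    le_rank_cfc_of_lt_eigSeq hSa hψ₁ (hε.trans hεv.le)
      (fun t ht => abs_sub_mul_ramp_le hε hεv
        (spectrum_nonneg_of_nonneg (S.nonneg_iff_isPositive.2 hS) ht)) hvβ
  have hrank₂ : ((cfc ψ₂ S : H →L[ℂ] H) : H →ₗ[ℂ] H).rank ≤ α := by
    refine Cardinal.lt_natCast_add_one_iff.1 ?_
    exact_mod_cast rank_cfc_lt_of_eigSeq_lt hSa hψ₂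
      (fun t _ ht => (lt_of_ramp_ne_zero hu.le ht).le) hαu
  have hrank : ((m + 1 : ℕ) : Cardinal)
      ≤ ((cfc (fun t => ψ₁ t - ψ₂ t) S : H →L[ℂ] H) : H →ₗ[ℂ] H).rank := by
    refine LinearMap.natCast_le_rank_of_le_rank_add
      (G := ((cfc ψ₂ S : H →L[ℂ] H) : H →ₗ[ℂ] H)) (l := α) ?_ hrank₂
    rw [← ContinuousLinearMap.toLinearMap_add, ← cfc_add S (fun t => ψ₁ t - ψ₂ t) ψ₂]
    simp only [sub_add_cancel]
    exact hrank₁.trans' (Nat.cast_le.2 (by omega))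
  have hcfc : cfc (fun t : ℝ => t - t * t) S = S - S * S := by
    rw [cfc_sub _ _ S, cfc_mul _ _ S, cfc_id' ℝ S]
  refine le_eigSeq_of_le_re_inner hrank fun x hx => ?_
  rw [← hcfc]
  refine le_re_inner_cfc_of_mem_range hSa (hψ₁.sub hψ₂)
    (by fun_prop) (fun t _ ht => ?_) hx
  obtain ⟨hεt, ht1⟩ := mem_Ioo_of_ramp_sub_ramp_ne_zero hεv hu (by linarith) (by linarith) ht
  nlinarith

theorem card_Icc_mul_rpow_le_tsum_eigSeq {S : H →L[ℂ] H} (hS : S.IsPositive) {p ε : ℝ}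
    (hp : 0 ≤ p) (hε₀ : 0 ≤ ε) (hε₁ : ε ≤ 1) {α β : ℕ} (hβ : ε < eigSeq S β)
    (hα : eigSeq S α < 1 - ε) (hsum : Summable fun n => eigSeq (S - S * S) n ^ p) :
    ((Finset.Icc α β).card : ℝ) * (ε - ε ^ 2) ^ p ≤ ∑' n, eigSeq (S - S * S) n ^ p := by
  calc ((Finset.Icc α β).card : ℝ) * (ε - ε ^ 2) ^ p
      = (Finset.range (β + 1 - α)).card • (ε - ε ^ 2) ^ p := by simp
    _ ≤ ∑ m ∈ Finset.range (β + 1 - α), eigSeq (S - S * S) m ^ p := by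
      refine Finset.card_nsmul_le_sum _ _ _ fun m hm => Real.rpow_le_rpow (by nlinarith)
        (le_eigSeq_sub_mul_self hS hε₀ hβ hα ?_) hp
      rw [Finset.mem_range] at hm
      omega
    _ ≤ ∑' n, eigSeq (S - S * S) n ^ p :=
      hsum.sum_le_tsum _ fun n _ => Real.rpow_nonneg (eigSeq_nonneg _ n) p

end innerProduct

theorem stmt_14_general {H : Type*} [NormedAddCommGroup H] [InnerProductSpace ℂ H] [CompleteSpace H]
    (S : H →L[ℂ] H)
    (hpos : S.IsPositive)
    (p : ℝ) (hp0 : 0 < p) (ε : ℝ) (hε : ε ∈ Set.Ioo (0 : ℝ) (1/2))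
    (hSch : Summable fun n => eigSeq (S - S * S) n ^ p) :
    {n : ℕ | eigSeq S n ∈ Set.Ioo ε (1 - ε)}.Finite ∧
    ({n : ℕ | eigSeq S n ∈ Set.Ioo ε (1 - ε)}.ncard : ℝ) ≤
      (∑' n, eigSeq (S - S * S) n ^ p) / (ε - ε ^ 2) ^ p := by
  set M := {n : ℕ | eigSeq S n ∈ Set.Ioo ε (1 - ε)}
  set T := ∑' n, eigSeq (S - S * S) n ^ p
  have hcp : 0 < (ε - ε ^ 2) ^ p := Real.rpow_pos_of_pos (by nlinarith [hε.1, hε.2]) p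
  have hspan : ∀ α ∈ M, ∀ β ∈ M, ((Finset.Icc α β).card : ℝ) * (ε - ε ^ 2) ^ p ≤ T :=
    fun α hα β hβ => card_Icc_mul_rpow_le_tsum_eigSeq hpos hp0.le hε.1.le
      (by linarith [hε.2]) hβ.1 hα.2 hSch
  have hbdd : BddAbove M := by
    rcases M.eq_empty_or_nonempty with hM | ⟨α, hα⟩
    · simp [hM]
    refine ⟨α + ⌊T / (ε - ε ^ 2) ^ p⌋₊, fun β hβ => ?_⟩
    have := Nat.le_floor ((le_div_iff₀ hcp).2 (hspan α hα β hβ))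
    rw [Nat.card_Icc] at this
    omega
  refine ⟨Set.finite_iff_bddAbove.2 hbdd, (le_div_iff₀ hcp).2 ?_⟩
  rcases M.eq_empty_or_nonempty with hM | hne
  · simpa [hM] using tsum_nonneg fun n => Real.rpow_nonneg (eigSeq_nonneg (S - S * S) n) p
  have hIcc : M ⊆ Set.Icc (sInf M) (sSup M) := fun n hn => ⟨Nat.sInf_le hn, le_csSup hbdd hn⟩
  refine le_trans ?_ (hspan _ (Nat.sInf_mem hne) _ (Nat.sSup_mem hne hbdd))
  gcongr
  simpa using Set.ncard_le_ncard hIcc (Set.finite_Icc _ _)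

/-- **Eq. (5.1).** The number of eigenvalues of `S` in `(ε, 1-ε)` is bounded by
`‖S - S²‖_p^p / (ε - ε²)^p`, where `‖T‖_p^p = Σ_n λ_n(T)^p` is the Schatten `p`-quasi-norm. -/
theorem stmt_14 {H : Type*} [NormedAddCommGroup H] [InnerProductSpace ℂ H] [CompleteSpace H]
    (S : H →L[ℂ] H) (hcomp : IsCompactOperator S)
    (hpos : S.IsPositive) (hle : (1 - S).IsPositive)
    (p : ℝ) (hp0 : 0 < p) (hp1 : p ≤ 1) (ε : ℝ) (hε : ε ∈ Set.Ioo (0 : ℝ) (1/2))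
    (hSch : Summable fun n => eigSeq (S - S * S) n ^ p) :
    {n : ℕ | eigSeq S n ∈ Set.Ioo ε (1 - ε)}.Finite ∧
    ({n : ℕ | eigSeq S n ∈ Set.Ioo ε (1 - ε)}.ncard : ℝ) ≤
      (∑' n, eigSeq (S - S * S) n ^ p) / (ε - ε ^ 2) ^ p :=
  stmt_14_general S hpos p hp0 ε hε hSch
end
end

section
/- For every 0 < a ≤ 1 and every set X ⊆ ℝ, the number of integers k with k ∈ aX + [−1/2, 1/2) is at most twice the number of integers k with k ∈ X + [−1/2, 1/2); that is, #{k ∈ ℤ : k ∈ aX + [−1/2,1/2)} ≤ 2·#{k ∈ ℤ : k ∈ X + [−1/2,1/2)} (as an inequality in ℕ ∪ {∞}). -/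
open Set
open scoped Pointwise

/-- **Eq. (3.8).** Contracting a set `X ⊆ ℝ` by a factor `a ∈ (0,1]` at most doubles the number
of integers in its `[-1/2,1/2)`-neighborhood. -/
theorem stmt_18 (a : ℝ) (ha : 0 < a) (ha1 : a ≤ 1) (X : Set ℝ) :
    {k : ℤ | (k : ℝ) ∈ a • X + Set.Ico (-(1:ℝ)/2) (1/2)}.encard ≤
      2 * {k : ℤ | (k : ℝ) ∈ X + Set.Ico (-(1:ℝ)/2) (1/2)}.encard := by
  set T := {k : ℤ | (k : ℝ) ∈ X + Set.Ico (-(1:ℝ)/2) (1/2)} with hT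
  have hsub : {k : ℤ | (k : ℝ) ∈ a • X + Set.Ico (-(1:ℝ)/2) (1/2)} ⊆
      (fun m : ℤ => ⌊a * (m : ℝ)⌋) '' T ∪ (fun m : ℤ => ⌊a * (m : ℝ)⌋ + 1) '' T := by
    rintro k hk
    obtain ⟨y, ⟨x, hx, rfl⟩, t, ht, hkt⟩ := hk
    simp only [smul_eq_mul] at hkt
    obtain ⟨ht1, ht2⟩ := ht
    set m : ℤ := ⌈x - 1/2⌉ with hm
    have hm1 : x - 1/2 ≤ (m : ℝ) := Int.le_ceil _
    have hm2 : (m : ℝ) < x + 1/2 := by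
      have := Int.ceil_lt_add_one (x - 1/2)
      linarith
    have hmT : m ∈ T := by
      refine ⟨x, hx, (m : ℝ) - x, ⟨by linarith, by linarith⟩, by ring⟩
    -- bounds on k around a*m
    have hlow : a * (m : ℝ) - 1 < (k : ℝ) := by nlinarith
    have hhigh : (k : ℝ) < a * (m : ℝ) + 1 := by nlinarith
    rcases le_or_gt (k : ℝ) (a * (m : ℝ)) with hle | hgt
    · left
      refine ⟨m, hmT, ?_⟩
      have h1 : k ≤ ⌊a * (m : ℝ)⌋ := Int.le_floor.mpr hle
      have h2 : ⌊a * (m : ℝ)⌋ ≤ k := by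
        have hf := Int.floor_le (a * (m : ℝ))
        have hlt : ((⌊a * (m : ℝ)⌋ : ℝ)) < (k : ℝ) + 1 := by linarith
        have : ⌊a * (m : ℝ)⌋ < k + 1 := by exact_mod_cast hlt
        omega
      show ⌊a * (m : ℝ)⌋ = k
      omega
    · right
      refine ⟨m, hmT, ?_⟩
      have h1 : ⌊a * (m : ℝ)⌋ + 1 ≤ k := by
        have : ⌊a * (m : ℝ)⌋ < k := Int.floor_lt.mpr hgt
        omega
      have h2 : k ≤ ⌊a * (m : ℝ)⌋ + 1 := by
        have : (k : ℝ) ≤ a * (m : ℝ) + 1 := le_of_lt hhigh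
        have := Int.le_floor.mpr (by push_cast; linarith : ((k - 1 : ℤ) : ℝ) ≤ a * (m : ℝ))
        omega
      show ⌊a * (m : ℝ)⌋ + 1 = k
      omega
  calc {k : ℤ | (k : ℝ) ∈ a • X + Set.Ico (-(1:ℝ)/2) (1/2)}.encard
      ≤ ((fun m : ℤ => ⌊a * (m : ℝ)⌋) '' T ∪ (fun m : ℤ => ⌊a * (m : ℝ)⌋ + 1) '' T).encard :=
        Set.encard_le_encard hsub
    _ ≤ ((fun m : ℤ => ⌊a * (m : ℝ)⌋) '' T).encard +
          ((fun m : ℤ => ⌊a * (m : ℝ)⌋ + 1) '' T).encard := Set.encard_union_le _ _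
    _ ≤ T.encard + T.encard := add_le_add (Set.encard_image_le _ _) (Set.encard_image_le _ _)
    _ = 2 * T.encard := (two_mul _).symm
end
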